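/- Let ρ be a state on ℂ^{d_A}⊗ℂ^{d_B}⊗ℂ^{d_C} that is not a PPT mixture. Then there exists a fully decomposable witness W, i.e., a Hermitian matrix W such that for each of the three bipartitions M ∈ {A, B, C} there exist positive semidefinite P_M, Q_M with W = P_M + Q_M^{T_M}, and such that tr(Wρ) < 0. -/

import Mathlib

open Matrix Finset ComplexOrder

/-- Operators on `ℂ^{d 0} ⊗ ℂ^{d 1} ⊗ ℂ^{d 2}` (three parties A, B, C). -/
abbrev MatD {n : ℕ} (d : Fin n → ℕ) :=
  Matrix ((a : Fin n) → Fin (d a)) ((a : Fin n) → Fin (d a)) ℂ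

/-- The partial transpose with respect to the subset `M` of tensor factors. -/
def ptrans {n : ℕ} (d : Fin n → ℕ) (M : Finset (Fin n)) (X : MatD d) : MatD d :=
  fun i j => X (fun a => if a ∈ M then j a else i a) (fun a => if a ∈ M then i a else j a)

/-- A state is a positive semidefinite matrix of trace 1. -/
def IsState {n : ℕ} {d : Fin n → ℕ} (ρ : MatD d) : Prop :=
  ρ.PosSemidef ∧ ρ.trace = 1

/-- A tripartite PPT mixture: `ρ = p₁ ρ_{A|BC} + p₂ ρ_{B|AC} + p₃ ρ_{C|AB}` where each
`ρ_{M|M̄}` is a state whose partial transpose w.r.t. the single party `M` is PSD. -/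
def IsPPTMixture3 (d : Fin 3 → ℕ) (ρ : MatD d) : Prop :=
  ∃ (p : Fin 3 → ℝ) (σ : Fin 3 → MatD d),
    (∀ i, 0 ≤ p i) ∧ (∑ i, p i = 1) ∧
    (∀ i, IsState (σ i) ∧ (ptrans d {i} (σ i)).PosSemidef) ∧
    ρ = ∑ i, (p i : ℂ) • σ i

/-!
A PPT mixture of trace one is exactly a trace-one element of the cone `K_A + K_B + K_C`, where
`K_M` is the cone of positive semidefinite `X` with `X^{T_M} ⪰ 0`. Since the trace bounds every
entry of a positive semidefinite matrix, this sum of cones is closed, so a state `ρ` outside it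
is separated from it by a Hermitian `W`: `re tr (W X) ≥ 0` on every `K_M` and `tr (W ρ) < 0`.
The partial transpose is self-adjoint for the trace pairing, so the dual of `K_M` is the
(likewise closed) cone `{P + Q^{T_M} | P, Q ⪰ 0}`, and `W` lies in it for every `M`.
-/

namespace Matrix

variable {m : Type*} [Fintype m]

lemma IsHermitian.im_trace_mul_eq_zero {A B : Matrix m m ℂ} (hA : A.IsHermitian)
    (hB : B.IsHermitian) : (A * B).trace.im = 0 := by
  have h : star (A * B).trace = (A * B).trace := by
    rw [← trace_conjTranspose, conjTranspose_mul, hA.eq, hB.eq, trace_mul_comm]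
  have him := congrArg Complex.im h
  simp only [Complex.star_def, Complex.conj_im] at him
  linarith

lemma PosSemidef.re_trace_nonneg {A : Matrix m m ℂ} (hA : A.PosSemidef) : 0 ≤ A.trace.re :=
  (Complex.le_def.mp hA.trace_nonneg).1

lemma PosSemidef.trace_eq_re {A : Matrix m m ℂ} (hA : A.PosSemidef) :
    A.trace = (A.trace.re : ℂ) :=
  Complex.ext rfl (Complex.le_def.mp hA.trace_nonneg).2.symm

lemma PosSemidef.re_apply_self_le_re_trace {A : Matrix m m ℂ} (hA : A.PosSemidef) (i : m) :
    (A i i).re ≤ A.trace.re := by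
  simpa [trace, Complex.re_sum] using Finset.single_le_sum
    (f := fun k => (A k k).re) (fun k _ => (Complex.le_def.mp hA.diag_nonneg).1) (Finset.mem_univ i)

/-- The `2 × 2` principal minor on `i, j` gives `‖A i j‖ ^ 2 ≤ A i i * A j j`. -/
lemma PosSemidef.norm_apply_le_re_trace {A : Matrix m m ℂ} (hA : A.PosSemidef) (i j : m) :
    ‖A i j‖ ≤ A.trace.re := by
  have hminor := Complex.le_def.mp ((hA.submatrix ![i, j]).det_nonneg)
  simp only [det_fin_two, submatrix_apply, Matrix.cons_val_zero, Matrix.cons_val_one] at hminor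
  have hji : A j i = star (A i j) := (hA.isHermitian.apply j i).symm
  have hdiag : ∀ k, (A k k).im = 0 ∧ 0 ≤ (A k k).re := fun k =>
    ⟨(Complex.le_def.mp hA.diag_nonneg).2.symm, (Complex.le_def.mp hA.diag_nonneg).1⟩
  have hnormSq : Complex.normSq (A i j) ≤ (A i i).re * (A j j).re := by
    rw [hji, Complex.star_def, Complex.mul_conj] at hminor
    simpa [Complex.mul_re, (hdiag i).1, (hdiag j).1] using hminor.1
  have hi := hA.re_apply_self_le_re_trace i
  have hj := hA.re_apply_self_le_re_trace j
  rw [Complex.normSq_eq_norm_sq] at hnormSq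
  nlinarith [norm_nonneg (A i j), (hdiag i).2, (hdiag j).2]

lemma isClosed_setOf_posSemidef : IsClosed {A : Matrix m m ℂ | A.PosSemidef} := by
  simp only [posSemidef_iff_dotProduct_mulVec, Set.ofPred_and, Set.ofPred_forall]
  refine (isClosed_eq continuous_id.matrix_conjTranspose continuous_id).inter
    (isClosed_iInter fun v => isClosed_le continuous_const ?_)
  exact continuous_const.dotProduct (continuous_id.matrix_mulVec continuous_const)

variable (m) in
def posSemidefCone : PointedCone ℝ (Matrix m m ℂ) where
  carrier := {A | A.PosSemidef}
  add_mem' := PosSemidef.add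
  zero_mem' := PosSemidef.zero
  smul_mem' c _ hA := hA.smul c.2

variable (m) in
noncomputable def reTrace : Matrix m m ℂ →ₗ[ℝ] ℝ :=
  Complex.reLm.comp (traceLinearMap m ℝ ℂ)

@[simp]
lemma reTrace_apply (A : Matrix m m ℂ) : reTrace m A = A.trace.re := rfl

lemma continuous_reTrace : Continuous (reTrace m) :=
  (reTrace m).continuous_of_finiteDimensional

lemma isCompact_posSemidefCone_sublevel (T : ℝ) :
    IsCompact {A ∈ posSemidefCone m | reTrace m A ≤ T} := by
  refine (isCompact_univ_pi fun _ => isCompact_univ_pi fun _ =>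
    isCompact_closedBall (0 : ℂ) T).of_isClosed_subset
    (isClosed_setOf_posSemidef.inter (isClosed_le continuous_reTrace continuous_const)) ?_
  rintro A ⟨hA, hAT⟩ i - j -
  simpa using (hA.norm_apply_le_re_trace i j).trans hAT

lemma posSemidef_of_forall_re_trace_mul_nonneg {X : Matrix m m ℂ} (hX : X.IsHermitian)
    (h : ∀ P : Matrix m m ℂ, P.PosSemidef → 0 ≤ (X * P).trace.re) : X.PosSemidef := by
  refine PosSemidef.of_dotProduct_mulVec_nonneg hX fun v => Complex.le_def.mpr ⟨?_, ?_⟩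
  · have := h _ (posSemidef_vecMulVec_self_star v)
    rwa [mul_vecMulVec, trace_vecMulVec, dotProduct_comm] at this
  · exact (hX.im_star_dotProduct_mulVec_self v).symm

lemma IsHermitian.re_trace_conjTranspose_mul {X : Matrix m m ℂ} (hX : X.IsHermitian)
    (Y : Matrix m m ℂ) : (Yᴴ * X).trace.re = (Y * X).trace.re := by
  rw [← hX.eq, ← conjTranspose_mul, trace_conjTranspose, hX.eq, trace_mul_comm]
  simp

/-- The pairing `re (tr (Y X))` is nondegenerate, as `re (tr (Y Yᴴ)) = ∑ |Y i j|²`. -/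
lemma exists_isHermitian_re_trace_mul_eq (f : Matrix m m ℂ →ₗ[ℝ] ℝ) :
    ∃ Y : Matrix m m ℂ, Y.IsHermitian ∧ ∀ X, X.IsHermitian → f X = (Y * X).trace.re := by
  let pairing : Matrix m m ℂ →ₗ[ℝ] Module.Dual ℝ (Matrix m m ℂ) :=
    LinearMap.mk₂ ℝ (fun Y X => (Y * X).trace.re) (by simp [add_mul]) (by simp)
      (by simp [mul_add]) (by simp)
  have hinj : Function.Injective pairing := by
    refine (injective_iff_map_eq_zero pairing).mpr fun Y hY => ?_
    have hre : (Y * Yᴴ).trace.re = 0 := LinearMap.congr_fun hY Yᴴ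
    rw [← trace_mul_conjTranspose_self_eq_zero_iff,
      (posSemidef_self_mul_conjTranspose Y).trace_eq_re, hre, Complex.ofReal_zero]
  obtain ⟨Y, hY⟩ := (LinearMap.injective_iff_surjective_of_finrank_eq_finrank
    Subspace.dual_finrank_eq.symm).mp hinj f
  refine ⟨(2⁻¹ : ℝ) • (Y + Yᴴ), ?_, fun X hX => ?_⟩
  · simp [IsHermitian, conjTranspose_smul, add_comm]
  · rw [← hY, smul_mul_assoc, trace_smul, add_mul, trace_add, Complex.smul_re, Complex.add_re,
      hX.re_trace_conjTranspose_mul]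
    simp only [pairing, LinearMap.mk₂_apply]
    ring

instance {n : Type*} : LocallyConvexSpace ℝ (Matrix m n ℂ) :=
  inferInstanceAs (LocallyConvexSpace ℝ (m → n → ℂ))

end Matrix

lemma isClosed_of_forall_isCompact_sublevel {X : Type*} [TopologicalSpace X] [T2Space X]
    {τ : X → ℝ} (hτ : Continuous τ) {S : Set X} (hS : ∀ T, IsCompact {x ∈ S | τ x ≤ T}) :
    IsClosed S := by
  refine closure_subset_iff_isClosed.mp fun x hx => ?_
  have hsub : {y | τ y < τ x + 1} ∩ S ⊆ {y ∈ S | τ y ≤ τ x + 1} := fun y hy => ⟨hy.2, hy.1.le⟩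
  have hx' := closure_mono hsub
    ((isOpen_lt hτ continuous_const).inter_closure ⟨show τ x < τ x + 1 from lt_add_one _, hx⟩)
  exact ((hS _).isClosed.closure_subset hx').1

lemma Submodule.mem_iSup_iff_exists_sum {ι R M : Type*} [Fintype ι] [Semiring R]
    [AddCommMonoid M] [Module R M] {p : ι → Submodule R M} {x : M} :
    x ∈ ⨆ i, p i ↔ ∃ v : ι → M, (∀ i, v i ∈ p i) ∧ ∑ i, v i = x := by
  constructor
  · intro hx
    obtain ⟨v, hv, rfl⟩ := (mem_iSup_iff_exists_finsupp p x).mp hx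
    exact ⟨v, hv, (Finsupp.sum_fintype v (fun _ y => y) fun _ => rfl).symm⟩
  · rintro ⟨v, hv, rfl⟩
    exact sum_mem fun i _ => mem_iSup_of_mem i (hv i)

/-- The `τ`-sublevel sets of the sum are images of products of compact sublevel sets. -/
lemma PointedCone.isClosed_iSup {E ι : Type*} [AddCommGroup E] [Module ℝ E] [TopologicalSpace E]
    [ContinuousAdd E] [T2Space E] [Fintype ι] {C : ι → PointedCone ℝ E} {τ : E →ₗ[ℝ] ℝ}
    (hτ : Continuous τ) (hnonneg : ∀ i, ∀ x ∈ C i, 0 ≤ τ x)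
    (hC : ∀ i T, IsCompact {x ∈ C i | τ x ≤ T}) :
    IsClosed ((⨆ i, C i : PointedCone ℝ E) : Set E) := by
  refine isClosed_of_forall_isCompact_sublevel hτ fun T => ?_
  have hsub : {x ∈ ((⨆ i, C i : PointedCone ℝ E) : Set E) | τ x ≤ T} =
      (fun v : ι → E => ∑ i, v i) '' Set.univ.pi (fun i => {x ∈ C i | τ x ≤ T}) ∩
        {x | τ x ≤ T} := by
    ext x
    simp only [Set.mem_ofPred_eq, SetLike.mem_coe, Submodule.mem_iSup_iff_exists_sum,
      Set.mem_inter_iff, Set.mem_image, Set.mem_univ_pi]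
    constructor
    · rintro ⟨⟨v, hv, rfl⟩, hT⟩
      refine ⟨⟨v, fun i => ⟨hv i, le_trans ?_ hT⟩, rfl⟩, hT⟩
      rw [map_sum]
      exact Finset.single_le_sum (fun j _ => hnonneg j _ (hv j)) (Finset.mem_univ i)
    · rintro ⟨⟨v, hv, rfl⟩, hT⟩
      exact ⟨⟨v, fun i => (hv i).1, rfl⟩, hT⟩
  rw [hsub]
  exact ((isCompact_univ_pi fun i => hC i T).image
    (continuous_finsetSum _ fun i _ => continuous_apply i)).inter_right
    (isClosed_le hτ continuous_const)

section PartialTranspose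

variable {n : ℕ} {d : Fin n → ℕ} {M : Finset (Fin n)}

lemma trace_ptrans (X : MatD d) : (ptrans d M X).trace = X.trace := by
  simp [ptrans, trace]

lemma conjTranspose_ptrans (X : MatD d) : (ptrans d M X)ᴴ = ptrans d M Xᴴ := rfl

lemma Matrix.IsHermitian.ptrans {X : MatD d} (hX : X.IsHermitian) :
    (ptrans d M X).IsHermitian := by
  rw [IsHermitian, conjTranspose_ptrans, hX.eq]

lemma ptrans_one : ptrans d M (1 : MatD d) = 1 := by
  ext i j
  by_cases hij : i = j
  · subst hij
    simp [ptrans]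
  · obtain ⟨a, ha⟩ := Function.ne_iff.mp hij
    rw [one_apply_ne hij]
    refine one_apply_ne fun h => ha ?_
    have := congrFun h a
    split_ifs at this <;> simp_all

lemma trace_mul_ptrans (A B : MatD d) :
    (A * ptrans d M B).trace = (ptrans d M A * B).trace := by
  let swap (p : ((a : Fin n) → Fin (d a)) × ((a : Fin n) → Fin (d a))) :=
    ((fun a => if a ∈ M then p.2 a else p.1 a), (fun a => if a ∈ M then p.1 a else p.2 a))
  have hswap : Function.Involutive swap := fun p => by
    ext a <;> by_cases a ∈ M <;> simp [swap, *]
  simp only [Matrix.trace, Matrix.diag, Matrix.mul_apply, ← Finset.sum_product',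
    Finset.univ_product_univ]
  refine Fintype.sum_bijective swap hswap.bijective _ _ fun p => ?_
  simp only [swap, ptrans]
  congr 2 <;> funext a <;> by_cases a ∈ M <;> simp [*]

variable (d M) in
noncomputable def ptransLinearMap : MatD d →ₗ[ℝ] MatD d where
  toFun := ptrans d M
  map_add' _ _ := rfl
  map_smul' _ _ := rfl

@[simp]
lemma ptransLinearMap_apply (X : MatD d) : ptransLinearMap d M X = ptrans d M X := rfl

variable (d M) in
noncomputable def pptCone : PointedCone ℝ (MatD d) :=
  posSemidefCone _ ⊓ (posSemidefCone _).comap (ptransLinearMap d M)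

variable (d M) in
noncomputable def decomposableCone : PointedCone ℝ (MatD d) :=
  posSemidefCone _ ⊔ (posSemidefCone _).map (ptransLinearMap d M)

variable (d) in
noncomputable def pptMixtureCone : PointedCone ℝ (MatD d) :=
  ⨆ i, pptCone d {i}

lemma mem_decomposableCone {W : MatD d} :
    W ∈ decomposableCone d M ↔
      ∃ P Q : MatD d, P.PosSemidef ∧ Q.PosSemidef ∧ W = P + ptrans d M Q := by
  simp only [decomposableCone, Submodule.mem_sup, PointedCone.mem_map]
  constructor
  · rintro ⟨P, hP, _, ⟨Q, hQ, rfl⟩, rfl⟩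
    exact ⟨P, Q, hP, hQ, rfl⟩
  · rintro ⟨P, Q, hP, hQ, rfl⟩
    exact ⟨P, hP, _, ⟨Q, hQ, rfl⟩, rfl⟩

lemma continuous_ptrans : Continuous (ptrans d M) :=
  (ptransLinearMap d M).continuous_of_finiteDimensional

lemma isClosed_decomposableCone : IsClosed (decomposableCone d M : Set (MatD d)) := by
  have hsup := iSup_bool_eq (f := fun b => cond b (posSemidefCone _)
    ((posSemidefCone _).map (ptransLinearMap d M)))
  rw [cond_true, cond_false] at hsup
  rw [decomposableCone, ← hsup]
  refine PointedCone.isClosed_iSup continuous_reTrace ?_ ?_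
  · rintro (_ | _) X hX
    · obtain ⟨Q, hQ, rfl⟩ := PointedCone.mem_map.mp hX
      simpa [trace_ptrans] using hQ.re_trace_nonneg
    · exact PosSemidef.re_trace_nonneg hX
  · rintro (_ | _) T
    · convert (isCompact_posSemidefCone_sublevel T).image (continuous_ptrans (M := M)) using 1
      ext X
      simp only [Set.mem_ofPred_eq, Set.mem_image]
      constructor
      · rintro ⟨⟨Q, hQ, rfl⟩, hT⟩
        exact ⟨Q, ⟨hQ, by simpa [trace_ptrans] using hT⟩, rfl⟩
      · rintro ⟨Q, ⟨hQ, hT⟩, rfl⟩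
        exact ⟨⟨Q, hQ, rfl⟩, by simpa [trace_ptrans] using hT⟩
    · exact isCompact_posSemidefCone_sublevel T

lemma isClosed_pptMixtureCone : IsClosed (pptMixtureCone d : Set (MatD d)) := by
  refine PointedCone.isClosed_iSup continuous_reTrace (fun i X hX => hX.1.re_trace_nonneg)
    fun i T => (isCompact_posSemidefCone_sublevel T).of_isClosed_subset ?_
      fun X hX => ⟨hX.1.1, hX.2⟩
  exact (isClosed_setOf_posSemidef.inter
    (isClosed_setOf_posSemidef.preimage continuous_ptrans)).inter
    (isClosed_le continuous_reTrace continuous_const)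

/-- Separating `W` from the closed decomposable cone yields a functional `re (tr (Z ⬝))` with
`Z` in the PPT cone. -/
lemma mem_decomposableCone_of_forall_mem_pptCone {W : MatD d} (hW : W.IsHermitian)
    (h : ∀ X ∈ pptCone d M, 0 ≤ (W * X).trace.re) : W ∈ decomposableCone d M := by
  by_contra hWC
  obtain ⟨f, hf, hfW⟩ := ProperCone.hyperplane_separation_point
    ⟨decomposableCone d M, isClosed_decomposableCone⟩ hWC
  obtain ⟨Z, hZ, hfZ⟩ := exists_isHermitian_re_trace_mul_eq f.toLinearMap
  have hZ_psd : Z.PosSemidef := posSemidef_of_forall_re_trace_mul_nonneg hZ fun P hP => by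
    rw [← hfZ P hP.isHermitian]
    refine hf P (mem_decomposableCone.mpr ⟨P, 0, hP, .zero, ?_⟩)
    rw [← ptransLinearMap_apply, map_zero, add_zero]
  have hZ_ppt : (ptrans d M Z).PosSemidef :=
    posSemidef_of_forall_re_trace_mul_nonneg hZ.ptrans fun Q hQ => by
      rw [← trace_mul_ptrans, ← hfZ _ hQ.isHermitian.ptrans]
      exact hf _ (mem_decomposableCone.mpr ⟨0, Q, .zero, hQ, (zero_add _).symm⟩)
  have hWZ := h Z ⟨hZ_psd, hZ_ppt⟩
  rw [trace_mul_comm, ← hfZ W hW] at hWZ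
  exact hfW.not_ge hWZ

end PartialTranspose

section States

variable {n : ℕ} {d : Fin n → ℕ} {M : Finset (Fin n)}

lemma exists_isState_ptrans_posSemidef [Nonempty ((a : Fin n) → Fin (d a))] :
    ∃ σ : MatD d, IsState σ ∧ (ptrans d M σ).PosSemidef := by
  have hN : (0 : ℝ) < Fintype.card ((a : Fin n) → Fin (d a)) := by
    exact_mod_cast Fintype.card_pos
  refine ⟨(Fintype.card ((a : Fin n) → Fin (d a)) : ℝ)⁻¹ • 1,
    ⟨PosSemidef.one.smul (inv_nonneg.mpr hN.le), ?_⟩, ?_⟩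
  · rw [trace_smul, trace_one, Complex.real_smul]
    push_cast
    field_simp
  · rw [← ptransLinearMap_apply, map_smul, ptransLinearMap_apply, ptrans_one]
    exact PosSemidef.one.smul (inv_nonneg.mpr hN.le)

lemma exists_isState_eq_smul_of_mem_pptCone [Nonempty ((a : Fin n) → Fin (d a))] {X : MatD d}
    (hX : X ∈ pptCone d M) :
    ∃ σ : MatD d, (IsState σ ∧ (ptrans d M σ).PosSemidef) ∧ X = (X.trace.re : ℂ) • σ := by
  obtain ⟨hpsd, hppt⟩ := hX
  have htrace := hpsd.trace_eq_re
  set t := X.trace.re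
  by_cases h0 : t = 0
  · obtain ⟨σ, hσ⟩ := exists_isState_ptrans_posSemidef (d := d) (M := M)
    refine ⟨σ, hσ, ?_⟩
    rw [h0, Complex.ofReal_zero, zero_smul, ← hpsd.trace_eq_zero_iff, htrace, h0,
      Complex.ofReal_zero]
  · have ht : 0 ≤ t⁻¹ := inv_nonneg.mpr hpsd.re_trace_nonneg
    refine ⟨t⁻¹ • X, ⟨⟨hpsd.smul ht, ?_⟩, ?_⟩, ?_⟩
    · rw [trace_smul, htrace, Complex.real_smul]
      push_cast
      field_simp
    · rw [← ptransLinearMap_apply, map_smul, ptransLinearMap_apply]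
      exact hppt.smul ht
    · rw [Complex.coe_smul, smul_smul, mul_inv_cancel₀ h0, one_smul]

end States

lemma isPPTMixture3_of_mem_pptMixtureCone {d : Fin 3 → ℕ} {ρ : MatD d} (hρ : ρ.trace = 1)
    (h : ρ ∈ pptMixtureCone d) : IsPPTMixture3 d ρ := by
  have : Nonempty ((a : Fin 3) → Fin (d a)) := by
    by_contra hempty
    rw [not_nonempty_iff] at hempty
    simp [trace_eq_zero_of_isEmpty] at hρ
  obtain ⟨X, hX, rfl⟩ := Submodule.mem_iSup_iff_exists_sum.mp h
  choose σ hσ hXσ using fun i => exists_isState_eq_smul_of_mem_pptCone (hX i)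
  refine ⟨fun i => (X i).trace.re, σ, fun i => (hX i).1.re_trace_nonneg, ?_, hσ,
    Finset.sum_congr rfl fun i _ => hXσ i⟩
  rw [← Complex.re_sum, ← trace_sum, hρ, Complex.one_re]

theorem exists_fully_decomposable_witness_of_not_PPTMixture
    (d : Fin 3 → ℕ) (ρ : MatD d) (hρ : IsState ρ) (h : ¬ IsPPTMixture3 d ρ) :
    ∃ W : MatD d, W.IsHermitian ∧
      (∀ i : Fin 3, ∃ P Q : MatD d, P.PosSemidef ∧ Q.PosSemidef ∧
        W = P + ptrans d {i} Q) ∧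
      (W * ρ).trace < 0 := by
  have hρK : ρ ∉ pptMixtureCone d := fun hmem =>
    h (isPPTMixture3_of_mem_pptMixtureCone hρ.2 hmem)
  obtain ⟨f, hf, hfρ⟩ := ProperCone.hyperplane_separation_point
    ⟨pptMixtureCone d, isClosed_pptMixtureCone⟩ hρK
  obtain ⟨W, hW, hfW⟩ := exists_isHermitian_re_trace_mul_eq f.toLinearMap
  refine ⟨W, hW, fun i => mem_decomposableCone.mp
    (mem_decomposableCone_of_forall_mem_pptCone hW fun X hX => ?_), ?_⟩
  · rw [← hfW X hX.1.isHermitian]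
    exact hf X (Submodule.mem_iSup_of_mem i hX)
  · refine Complex.lt_def.mpr ⟨?_, hW.im_trace_mul_eq_zero hρ.1.isHermitian⟩
    rw [← hfW ρ hρ.1.isHermitian]
    exact hfρ
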